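/- Every nonempty rich word w can be extended on the left: there exists a letter y such that yw is rich. -/

import Mathlib

/-!
Prepending a letter `y` to `w` creates at most one new palindromic factor: new ones are prefixes
of `y :: w`, and of two palindromic prefixes the shorter is a suffix of the longer, hence a factor
of `w`. So `w` is rich iff building it letter by letter (on either side, by reversal) creates a
new palindrome at every step; in particular prefixes of rich words are rich.

Let `v` be the longest palindromic prefix of `w` minus its last letter, and `w = v x t`. Then
`x v x` is a palindromic prefix of `x w`, and it is new: an occurrence `w = s (x v x) t'` gives a
rich prefix `P = s x v` of `w` shorter than `w`, so no palindromic prefix of `P` is longer than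
`v`. As `v` occurs in the tail of `P`, every palindromic factor of `P` already occurs in its tail,
contradicting richness.
-/

def Rich {A : Type*} (w : List A) : Prop :=
  {p : List A | p.reverse = p ∧ p <:+: w}.ncard = w.length + 1

open List

section

variable {A : Type*}

def palFactors (w : List A) : Set (List A) := {p | p.reverse = p ∧ p <:+: w}

theorem rich_iff_ncard_palFactors {w : List A} :
    Rich w ↔ (palFactors w).ncard = w.length + 1 := Iff.rfl

theorem palFactors_finite (w : List A) : (palFactors w).Finite :=
  (List.finite_toSet w.sublists).subset fun _ hp => mem_sublists.2 hp.2.sublist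

theorem palFactors_mono {u w : List A} (h : u <:+: w) : palFactors u ⊆ palFactors w :=
  fun _ hp => ⟨hp.1, hp.2.trans h⟩

theorem palFactors_nil : palFactors ([] : List A) = {[]} := by
  ext p
  simp +contextual [palFactors]

theorem palFactors_reverse (w : List A) : palFactors w.reverse = palFactors w := by
  ext p
  refine and_congr_right fun hp => ?_
  rw [← reverse_infix, hp, reverse_reverse]

theorem List.IsPrefix.isSuffix_of_reverse_eq {p v : List A} (h : p <+: v)
    (hp : p.reverse = p) (hv : v.reverse = v) : p <:+ v := by
  simpa only [hp, hv] using h.reverse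

theorem eq_of_mem_palFactors_cons_sdiff {y : A} {w p q : List A}
    (hp : p ∈ palFactors (y :: w) \ palFactors w) (hq : q ∈ palFactors (y :: w) \ palFactors w)
    (hpq : p.length ≤ q.length) : p = q := by
  obtain ⟨⟨hp, hpy⟩, hpw⟩ := hp
  obtain ⟨⟨hq, hqy⟩, hqw⟩ := hq
  replace hpy : p <+: y :: w := (infix_cons_iff.1 hpy).resolve_right fun h => hpw ⟨hp, h⟩
  replace hqy : q <+: y :: w := (infix_cons_iff.1 hqy).resolve_right fun h => hqw ⟨hq, h⟩
  have hsuf : p <:+ q := (prefix_of_prefix_length_le hpy hqy hpq).isSuffix_of_reverse_eq hp hq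
  obtain rfl | ⟨t, rfl, ht⟩ := prefix_cons_iff.1 hqy
  · exact absurd ⟨rfl, nil_infix⟩ hqw
  · obtain rfl | hpt := suffix_cons_iff.1 hsuf
    · rfl
    · exact absurd ⟨hp, hpt.isInfix.trans ht.isInfix⟩ hpw

theorem ncard_palFactors_cons_le (y : A) (w : List A) :
    (palFactors (y :: w)).ncard ≤ (palFactors w).ncard + 1 := by
  have hnew : (palFactors (y :: w) \ palFactors w).ncard ≤ 1 := by
    refine (Set.ncard_le_one (palFactors_finite _).sdiff).2 fun p hp q hq => ?_
    rcases le_total p.length q.length with hpq | hqp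
    · exact eq_of_mem_palFactors_cons_sdiff hp hq hpq
    · exact (eq_of_mem_palFactors_cons_sdiff hq hp hqp).symm
  have := Set.ncard_le_ncard_sdiff_add_ncard (palFactors (y :: w)) (palFactors w)
    (palFactors_finite w)
  omega

theorem ncard_palFactors_append_le_left (u v : List A) :
    (palFactors (u ++ v)).ncard ≤ (palFactors v).ncard + u.length := by
  induction u with
  | nil => simp
  | cons y u ih =>
    have := ncard_palFactors_cons_le y (u ++ v)
    simp only [cons_append, length_cons]
    omega

theorem ncard_palFactors_append_le_right (u v : List A) :
    (palFactors (u ++ v)).ncard ≤ (palFactors u).ncard + v.length := by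
  have := ncard_palFactors_append_le_left v.reverse u.reverse
  rwa [← reverse_append, palFactors_reverse, palFactors_reverse, length_reverse] at this

theorem ncard_palFactors_le (w : List A) : (palFactors w).ncard ≤ w.length + 1 := by
  simpa [palFactors_nil, add_comm] using ncard_palFactors_append_le_left w []

theorem Rich.of_prefix {u w : List A} (hw : Rich w) (h : u <+: w) : Rich u := by
  obtain ⟨v, rfl⟩ := h
  have h₁ := ncard_palFactors_append_le_right u v
  have h₂ := ncard_palFactors_le u
  rw [rich_iff_ncard_palFactors, length_append] at hw
  rw [rich_iff_ncard_palFactors]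
  omega

theorem Rich.cons_of_not_infix {y : A} {w p : List A} (hw : Rich w) (hp : p.reverse = p)
    (hpy : p <+: y :: w) (hpw : ¬ p <:+: w) : Rich (y :: w) := by
  have hsub : insert p (palFactors w) ⊆ palFactors (y :: w) :=
    Set.insert_subset ⟨hp, hpy.isInfix⟩ (palFactors_mono (suffix_cons y w).isInfix)
  have h₁ := Set.ncard_le_ncard hsub (palFactors_finite _)
  rw [Set.ncard_insert_of_notMem (fun h => hpw h.2) (palFactors_finite w)] at h₁
  have h₂ := ncard_palFactors_le (y :: w)
  rw [rich_iff_ncard_palFactors] at hw ⊢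
  rw [length_cons] at h₂ ⊢
  omega

theorem Rich.not_infix_tail {u v : List A} (hu : Rich u) (hne : u ≠ []) (hv : v <+: u)
    (hlong : ∀ r : List A, r.reverse = r → r <+: u → r.length ≤ v.length) :
    ¬ v <:+: u.tail := by
  intro hvu
  obtain ⟨y, u, rfl⟩ := exists_cons_of_ne_nil hne
  have hsub : palFactors (y :: u) ⊆ palFactors u := by
    rintro p ⟨hp, hpu⟩
    refine ⟨hp, (infix_cons_iff.1 hpu).elim (fun hpy => ?_) id⟩
    exact (prefix_of_prefix_length_le hpy hv (hlong p hp hpy)).isInfix.trans hvu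
  have h₁ := Set.ncard_le_ncard hsub (palFactors_finite u)
  have h₂ := ncard_palFactors_le u
  rw [rich_iff_ncard_palFactors, length_cons] at hu
  omega

theorem exists_longest_palindrome_prefix (w : List A) :
    ∃ v : List A, v.reverse = v ∧ v <+: w ∧
      ∀ r : List A, r.reverse = r → r <+: w → r.length ≤ v.length := by
  classical
  let IsPalPrefix (n : ℕ) : Prop := (w.take n).reverse = w.take n
  refine ⟨w.take (Nat.findGreatest IsPalPrefix w.length),
    Nat.findGreatest_spec (P := IsPalPrefix) (Nat.zero_le _) rfl, take_prefix _ _,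
    fun r hr hrw => ?_⟩
  rw [length_take_of_le (Nat.findGreatest_le _)]
  refine Nat.le_findGreatest hrw.length_le ?_
  simpa only [IsPalPrefix, ← prefix_iff_eq_take.1 hrw]

theorem exists_eq_append_cons_of_prefix_dropLast {v w : List A} (h : v <+: w.dropLast)
    (hne : w ≠ []) : ∃ x t, w = v ++ x :: t := by
  obtain ⟨t', ht'⟩ := h
  rw [← dropLast_append_getLast hne, ← ht']
  cases t' with
  | nil => exact ⟨w.getLast hne, [], by simp⟩
  | cons x t => exact ⟨x, t ++ [w.getLast hne], by simp⟩

end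

theorem stmt7_general {A : Type*} (w : List A) (hw : Rich w) (hne : w ≠ []) :
    ∃ y : A, Rich (y :: w) := by
  obtain ⟨v, hv, hvw, hlong⟩ := exists_longest_palindrome_prefix w.dropLast
  obtain ⟨x, t, rfl⟩ := exists_eq_append_cons_of_prefix_dropLast hvw hne
  refine ⟨x, hw.cons_of_not_infix (p := x :: v ++ [x]) (by simp [hv]) (by simp) ?_⟩
  rintro ⟨s, t', hst⟩
  have hP : s ++ x :: v <+: (v ++ x :: t).dropLast := by
    refine prefix_of_prefix_length_le ⟨x :: t', by rw [← hst]; simp⟩ (dropLast_prefix _) ?_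
    have := congrArg length hst
    simp only [length_append, length_cons, length_dropLast] at this ⊢
    omega
  have hvP : v <:+ s ++ x :: v := (suffix_cons x v).trans (suffix_append s _)
  have hPrich : Rich (s ++ x :: v) := hw.of_prefix (hP.trans (dropLast_prefix _))
  refine hPrich.not_infix_tail (by simp) (prefix_of_prefix_length_le hvw hP hvP.length_le)
    (fun r hr hrP => hlong r hr (hrP.trans hP)) ?_
  rw [← singleton_append, ← append_assoc, tail_append_of_ne_nil (by simp)]
  exact (suffix_append _ _).isInfix

theorem stmt7 {A : Type*} [Fintype A] (w : List A) (hw : Rich w) (hne : w ≠ []) :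
    ∃ y : A, Rich (y :: w) :=
  stmt7_general w hw hne
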